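/- Let k be a field of characteristic different from 2, let n ≥ 2, and let a₁, …, aₙ be units of k. Suppose there exists a nonzero vector (x, t) ∈ k^{2^{n−1}} × k with ⟨⟨a₁,…,a_{n−1}⟩⟩(x) = aₙ·t², i.e. the quadratic form ⟨⟨a₁,…,a_{n−1}⟩⟩ ⊥ ⟨−aₙ⟩ is isotropic over k (equivalently, the norm quadric Q_{a₁,…,aₙ} has a k-rational point). Then the symbol {a₁,…,aₙ} is divisible by 2 in the Milnor K-group K_n^M(k). -/

import Mathlib

open scoped TensorProduct

/-- The Steinberg submodule of the `n`-fold tensor power (over `ℤ`) of `kˣ`: the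
subgroup generated by the elementary tensors `a₁ ⊗ ⋯ ⊗ aₙ` with `aᵢ + aᵢ₊₁ = 1` in `k`
for some `i`. -/
def steinbergSubmodule (k : Type*) [Field k] (n : ℕ) :
    Submodule ℤ (⨂[ℤ]^n (Additive kˣ)) :=
  Submodule.span ℤ
    { x | ∃ (u : Fin n → kˣ) (i j : Fin n), (i : ℕ) + 1 = (j : ℕ) ∧
        ((u i : k) + (u j : k) = 1) ∧
        x = PiTensorProduct.tprod ℤ (fun t => Additive.ofMul (u t)) }

/-- The `n`-th Milnor K-group `K_n^M(k)`: the quotient of the `n`-fold tensor power over `ℤ`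
of the multiplicative group `kˣ` by the Steinberg relations. -/
def MilnorKGroup (k : Type*) [Field k] (n : ℕ) :=
  (⨂[ℤ]^n (Additive kˣ)) ⧸ steinbergSubmodule k n

noncomputable instance (k : Type*) [Field k] (n : ℕ) : AddCommGroup (MilnorKGroup k n) :=
  Submodule.Quotient.addCommGroup _

/-- The Milnor symbol `{a₁,…,aₙ} ∈ K_n^M(k)`. -/
noncomputable def milnorSymbol {k : Type*} [Field k] {n : ℕ} (u : Fin n → kˣ) : MilnorKGroup k n :=
  Submodule.Quotient.mk (PiTensorProduct.tprod ℤ (fun t => Additive.ofMul (u t)))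

/-- The coefficient of the Pfister form `⟨⟨a₁,…,aₙ⟩⟩` at the variable indexed by
`S : Fin n → Bool`. -/
def pfisterCoeff {k : Type*} [Field k] (n : ℕ) (a : Fin n → k) (S : Fin n → Bool) : k :=
  ∏ i ∈ Finset.univ.filter (fun i => S i = true), (-(a i))

/-- The `n`-fold Pfister form `⟨⟨a₁,…,aₙ⟩⟩`, a diagonal quadratic form in `2ⁿ` variables
indexed by `Fin n → Bool`. -/
def pfisterForm {k : Type*} [Field k] (n : ℕ) (a : Fin n → k)
    (x : (Fin n → Bool) → k) : k :=
  ∑ S : Fin n → Bool, pfisterCoeff n a S * x S ^ 2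

/-!
The hypothesis says that `aₙ` is a value of `φ = ⟨⟨a₁,…,aₙ₋₁⟩⟩`: either directly (`t ≠ 0`), or
because `φ` is isotropic and hence universal. One then shows by induction on `r` that whenever
`c` is a value of `⟨⟨b₁,…,b_r⟩⟩`, the symbol `{b₁,…,b_r,c}` lies in `2 K^M`. For `r = 0`, `c` is a
square. Since `⟨⟨b,β⟩⟩ = ⟨⟨b⟩⟩ ⊥ -β⟨⟨b⟩⟩`, a value of `⟨⟨b,β⟩⟩` has the form `c = p - βq` with `p`,
`q` values of `⟨⟨b⟩⟩` or zero. The units `w` with `{b,w} ∈ 2 K^M` form a subgroup, which by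
induction contains the nonzero ones among `p, q`, and modulo `2 K^M` the symbol `{b,x,y}` does not
change when `x` or `y` is multiplied by an element of this subgroup. The Steinberg relation
`{b, βq/p, c/p} = 0` (or `{b,β,-β} = 0` when `p = 0`) then shows `{b,β,c} ∈ 2 K^M`.
-/

noncomputable def PiTensorProduct.snocRight {R M : Type*} [CommSemiring R] [AddCommMonoid M]
    [Module R M] {n : ℕ} (m : M) : (⨂[R]^n M) →ₗ[R] ⨂[R]^(n + 1) M :=
  (PiTensorProduct.lift
    (PiTensorProduct.tprod R (s := fun _ : Fin (n + 1) => M)).curryRight).flip m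

theorem PiTensorProduct.snocRight_tprod {R M : Type*} [CommSemiring R] [AddCommMonoid M]
    [Module R M] {n : ℕ} (m : M) (f : Fin n → M) :
    snocRight m (tprod R f) = tprod R (Fin.snoc f m : Fin (n + 1) → M) := by
  simp [snocRight]

theorem AddMonoidHom.map_mem_range_nsmulAddMonoidHom {M N : Type*} [AddCommGroup M]
    [AddCommGroup N] (f : M →+ N) (m : ℕ) {x : M} (hx : x ∈ (nsmulAddMonoidHom m).range) :
    f x ∈ (nsmulAddMonoidHom m).range := by
  obtain ⟨y, rfl⟩ := hx
  exact ⟨f y, by simp⟩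

section Pfister

variable {k : Type*} [Field k]

theorem pfisterForm_zero (a : Fin 0 → k) (x : (Fin 0 → Bool) → k) :
    pfisterForm 0 a x = x (fun _ => false) ^ 2 := by
  rw [pfisterForm, Fintype.sum_subsingleton _ fun _ => false]
  simp [pfisterCoeff]

theorem pfisterCoeff_snoc (n : ℕ) (a : Fin (n + 1) → k) (S : Fin n → Bool) (b : Bool) :
    pfisterCoeff (n + 1) a (Fin.snoc S b) =
      (if b then -a (Fin.last n) else 1) * pfisterCoeff n (fun i => a i.castSucc) S := by
  simp only [pfisterCoeff, Finset.prod_filter, Fin.prod_univ_castSucc, Fin.snoc_castSucc,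
    Fin.snoc_last]
  ring

theorem pfisterForm_succ (n : ℕ) (a : Fin (n + 1) → k) (x : (Fin (n + 1) → Bool) → k) :
    pfisterForm (n + 1) a x =
      pfisterForm n (fun i => a i.castSucc) (fun S => x (Fin.snoc S false)) -
        a (Fin.last n) * pfisterForm n (fun i => a i.castSucc) (fun S => x (Fin.snoc S true)) := by
  rw [pfisterForm, ← (Fin.snocEquiv fun _ => Bool).sum_comp, Fintype.sum_prod_type,
    Fintype.sum_bool]
  simp only [Fin.snocEquiv, Equiv.coe_fn_mk, pfisterCoeff_snoc, if_true, Bool.false_eq_true,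
    if_false, one_mul, pfisterForm, Finset.mul_sum, sub_eq_add_neg, ← Finset.sum_neg_distrib]
  rw [add_comm]
  congr 1
  exact Finset.sum_congr rfl fun S _ => by ring

theorem pfisterForm_smul (n : ℕ) (a : Fin n → k) (t : k) (x : (Fin n → Bool) → k) :
    pfisterForm n a (t • x) = t ^ 2 * pfisterForm n a x := by
  simp only [pfisterForm, Finset.mul_sum, Pi.smul_apply, smul_eq_mul]
  exact Finset.sum_congr rfl fun S _ => by ring

theorem pfisterForm_add_single (n : ℕ) (a : Fin n → k) (x : (Fin n → Bool) → k)
    (S₀ : Fin n → Bool) (s : k) :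
    pfisterForm n a (x + Pi.single S₀ s) =
      pfisterForm n a x + pfisterCoeff n a S₀ * (2 * x S₀ * s + s ^ 2) := by
  have h : ∀ S, pfisterCoeff n a S * (x + Pi.single S₀ s : (Fin n → Bool) → k) S ^ 2 =
      pfisterCoeff n a S * x S ^ 2 +
        if S = S₀ then pfisterCoeff n a S₀ * (2 * x S₀ * s + s ^ 2) else 0 := by
    intro S
    rcases eq_or_ne S S₀ with rfl | hS
    · simp only [Pi.add_apply, Pi.single_eq_same, if_true]
      ring
    · simp [hS]
  simp only [pfisterForm, h, Finset.sum_add_distrib, Finset.sum_ite_eq', Finset.mem_univ, if_true]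

theorem pfisterCoeff_ne_zero {n : ℕ} {a : Fin n → k} (ha : ∀ i, a i ≠ 0) (S : Fin n → Bool) :
    pfisterCoeff n a S ≠ 0 :=
  Finset.prod_ne_zero_iff.mpr fun i _ => neg_ne_zero.mpr (ha i)

theorem pfisterForm_surjective_of_isotropic (h2 : (2 : k) ≠ 0) {n : ℕ} {a : Fin n → k}
    (ha : ∀ i, a i ≠ 0) {x : (Fin n → Bool) → k} (hx0 : x ≠ 0) (hx : pfisterForm n a x = 0) :
    Function.Surjective (pfisterForm n a) := by
  intro w
  obtain ⟨S₀, hS₀ : x S₀ ≠ 0⟩ := Function.ne_iff.mp hx0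
  have hc := pfisterCoeff_ne_zero ha S₀
  -- `φ(t • x + e_{S₀}) = c_{S₀} (2 t x_{S₀} + 1)` is affine in `t` with nonzero slope.
  refine ⟨((w / pfisterCoeff n a S₀ - 1) / (2 * x S₀)) • x + Pi.single S₀ 1, ?_⟩
  rw [pfisterForm_add_single, pfisterForm_smul, hx, Pi.smul_apply, smul_eq_mul]
  field_simp
  ring

theorem exists_pfisterForm_eq_of_eq_mul_sq (h2 : (2 : k) ≠ 0) {n : ℕ} {a : Fin n → k}
    (ha : ∀ i, a i ≠ 0) {c : k} {v : ((Fin n → Bool) → k) × k} (hv : v ≠ 0)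
    (h : pfisterForm n a v.1 = c * v.2 ^ 2) : ∃ y, pfisterForm n a y = c := by
  rcases eq_or_ne v.2 0 with ht | ht
  · refine pfisterForm_surjective_of_isotropic h2 ha (fun hx => hv (Prod.ext hx ht)) ?_ c
    rw [h, ht]
    ring
  · refine ⟨v.2⁻¹ • v.1, ?_⟩
    rw [pfisterForm_smul, h]
    field_simp

end Pfister

namespace MilnorKGroup

variable {k : Type*} [Field k] {n : ℕ}

noncomputable def symbolMultilinear (k : Type*) [Field k] (n : ℕ) :
    MultilinearMap ℤ (fun _ : Fin n => Additive kˣ) (MilnorKGroup k n) :=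
  (steinbergSubmodule k n).mkQ.compMultilinearMap (PiTensorProduct.tprod ℤ)

theorem milnorSymbol_eq_symbolMultilinear (u : Fin n → kˣ) :
    milnorSymbol u = symbolMultilinear k n (fun i => Additive.ofMul (u i)) := rfl

theorem milnorSymbol_update_mul (u : Fin n → kˣ) (i : Fin n) (x y : kˣ) :
    milnorSymbol (Function.update u i (x * y)) =
      milnorSymbol (Function.update u i x) + milnorSymbol (Function.update u i y) := by
  simp only [milnorSymbol_eq_symbolMultilinear, ← Function.comp_apply (f := Additive.ofMul),
    Function.comp_update]
  exact MultilinearMap.map_update_add _ _ _ _ _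

theorem milnorSymbol_update_one (u : Fin n → kˣ) (i : Fin n) :
    milnorSymbol (Function.update u i 1) = 0 := by
  simp only [milnorSymbol_eq_symbolMultilinear, ← Function.comp_apply (f := Additive.ofMul),
    Function.comp_update]
  exact MultilinearMap.map_update_zero _ _ _

theorem milnorSymbol_update_inv (u : Fin n → kˣ) (i : Fin n) (x : kˣ) :
    milnorSymbol (Function.update u i x⁻¹) = -milnorSymbol (Function.update u i x) := by
  rw [eq_neg_iff_add_eq_zero, add_comm, ← milnorSymbol_update_mul, mul_inv_cancel,
    milnorSymbol_update_one]

theorem milnorSymbol_eq_zero_of_add_eq_one (u : Fin n → kˣ) {i j : Fin n}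
    (hij : (i : ℕ) + 1 = j) (h : (u i : k) + u j = 1) : milnorSymbol u = 0 :=
  (Submodule.Quotient.mk_eq_zero _).mpr (Submodule.subset_span ⟨u, i, j, hij, h, rfl⟩)

theorem milnorSymbol_snoc_mul (u : Fin n → kˣ) (x y : kˣ) :
    milnorSymbol (Fin.snoc u (x * y) : Fin (n + 1) → kˣ) =
      milnorSymbol (Fin.snoc u x : Fin (n + 1) → kˣ) +
        milnorSymbol (Fin.snoc u y : Fin (n + 1) → kˣ) := by
  simpa only [Fin.update_snoc_last] using milnorSymbol_update_mul (Fin.snoc u 1) (Fin.last n) x y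

theorem milnorSymbol_snoc_inv (u : Fin n → kˣ) (x : kˣ) :
    milnorSymbol (Fin.snoc u x⁻¹ : Fin (n + 1) → kˣ) =
      -milnorSymbol (Fin.snoc u x : Fin (n + 1) → kˣ) := by
  simpa only [Fin.update_snoc_last] using milnorSymbol_update_inv (Fin.snoc u 1) (Fin.last n) x

theorem milnorSymbol_snoc_one (u : Fin n → kˣ) :
    milnorSymbol (Fin.snoc u 1 : Fin (n + 1) → kˣ) = 0 := by
  simpa only [Fin.update_snoc_last] using milnorSymbol_update_one (Fin.snoc u 1) (Fin.last n)

theorem milnorSymbol_snoc_snoc_mul (u : Fin n → kˣ) (x y w : kˣ) :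
    milnorSymbol (Fin.snoc (Fin.snoc u (x * y)) w : Fin (n + 2) → kˣ) =
      milnorSymbol (Fin.snoc (Fin.snoc u x) w : Fin (n + 2) → kˣ) +
        milnorSymbol (Fin.snoc (Fin.snoc u y) w : Fin (n + 2) → kˣ) := by
  simpa only [← Fin.snoc_update, Fin.update_snoc_last] using
    milnorSymbol_update_mul (Fin.snoc (Fin.snoc u 1) w) (Fin.last n).castSucc x y

theorem milnorSymbol_snoc_snoc_inv (u : Fin n → kˣ) (x w : kˣ) :
    milnorSymbol (Fin.snoc (Fin.snoc u x⁻¹) w : Fin (n + 2) → kˣ) =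
      -milnorSymbol (Fin.snoc (Fin.snoc u x) w : Fin (n + 2) → kˣ) := by
  simpa only [← Fin.snoc_update, Fin.update_snoc_last] using
    milnorSymbol_update_inv (Fin.snoc (Fin.snoc u 1) w) (Fin.last n).castSucc x

theorem milnorSymbol_snoc_snoc_of_add_eq_one (u : Fin n → kˣ) {x y : kˣ}
    (h : (x : k) + y = 1) :
    milnorSymbol (Fin.snoc (Fin.snoc u x) y : Fin (n + 2) → kˣ) = 0 :=
  milnorSymbol_eq_zero_of_add_eq_one _ (i := (Fin.last n).castSucc) (j := Fin.last (n + 1))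
    rfl (by simpa using h)

theorem milnorSymbol_snoc_snoc_neg_self (u : Fin n → kˣ) (x : kˣ) :
    milnorSymbol (Fin.snoc (Fin.snoc u x) (-x) : Fin (n + 2) → kˣ) = 0 := by
  rcases eq_or_ne (x : k) 1 with hx | hx
  · rw [Units.val_eq_one.mp hx]
    simpa only [← Fin.snoc_update, Fin.update_snoc_last] using
      milnorSymbol_update_one (Fin.snoc (Fin.snoc u 1) (-1)) (Fin.last n).castSucc
  have h₁ : (1 : k) - x ≠ 0 := sub_ne_zero.mpr hx.symm
  have h₂ : (1 : k) - (x : k)⁻¹ ≠ 0 := sub_ne_zero.mpr (by simpa [eq_comm] using hx)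
  -- `-x = (1 - x) / (1 - x⁻¹)`, and both `{x, 1 - x}` and `{x⁻¹, 1 - x⁻¹}` vanish.
  have hneg : -x = Units.mk0 _ h₁ * (Units.mk0 _ h₂)⁻¹ := by
    have hx0 := x.ne_zero
    ext
    simp only [Units.val_neg, Units.val_mul, Units.val_inv_eq_inv_val, Units.val_mk0]
    field_simp
    ring
  rw [hneg, milnorSymbol_snoc_mul, milnorSymbol_snoc_inv, ← milnorSymbol_snoc_snoc_inv,
    milnorSymbol_snoc_snoc_of_add_eq_one u (by simp),
    milnorSymbol_snoc_snoc_of_add_eq_one u (by simp), add_zero]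

theorem milnorSymbol_snoc_snoc_swap (u : Fin n → kˣ) (x y : kˣ) :
    milnorSymbol (Fin.snoc (Fin.snoc u x) y : Fin (n + 2) → kˣ) =
      -milnorSymbol (Fin.snoc (Fin.snoc u y) x : Fin (n + 2) → kˣ) := by
  have hx : milnorSymbol (Fin.snoc (Fin.snoc u x) (-(x * y)) : Fin (n + 2) → kˣ) =
      milnorSymbol (Fin.snoc (Fin.snoc u x) y : Fin (n + 2) → kˣ) := by
    rw [← neg_mul, milnorSymbol_snoc_mul, milnorSymbol_snoc_snoc_neg_self, zero_add]
  have hy : milnorSymbol (Fin.snoc (Fin.snoc u y) (-(x * y)) : Fin (n + 2) → kˣ) =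
      milnorSymbol (Fin.snoc (Fin.snoc u y) x : Fin (n + 2) → kˣ) := by
    rw [mul_comm, ← neg_mul, milnorSymbol_snoc_mul, milnorSymbol_snoc_snoc_neg_self, zero_add]
  have h := milnorSymbol_snoc_snoc_neg_self u (x * y)
  rw [milnorSymbol_snoc_snoc_mul, hx, hy] at h
  exact eq_neg_iff_add_eq_zero.mpr h

theorem steinbergSubmodule_le_comap_snocRight (w : kˣ) :
    steinbergSubmodule k n ≤
      (steinbergSubmodule k (n + 1)).comap (PiTensorProduct.snocRight (Additive.ofMul w)) := by
  rw [steinbergSubmodule, Submodule.span_le]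
  rintro _ ⟨u, i, j, hij, h, rfl⟩
  refine Submodule.subset_span ⟨Fin.snoc u w, i.castSucc, j.castSucc, hij, by simpa using h, ?_⟩
  rw [PiTensorProduct.snocRight_tprod]
  exact congrArg _ (Fin.comp_snoc Additive.ofMul u w).symm

noncomputable def mulSymbol (w : kˣ) : MilnorKGroup k n →+ MilnorKGroup k (n + 1) :=
  (Submodule.mapQ _ _ _ (steinbergSubmodule_le_comap_snocRight w)).toAddMonoidHom

theorem mulSymbol_milnorSymbol (w : kˣ) (u : Fin n → kˣ) :
    mulSymbol w (milnorSymbol u) = milnorSymbol (Fin.snoc u w : Fin (n + 1) → kˣ) := by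
  change Submodule.Quotient.mk (PiTensorProduct.snocRight _ _) = _
  rw [PiTensorProduct.snocRight_tprod]
  exact congrArg _ (congrArg _ (Fin.comp_snoc Additive.ofMul u w).symm)

def divTwoSubgroup (u : Fin n → kˣ) : Subgroup kˣ where
  carrier := {x | milnorSymbol (Fin.snoc u x : Fin (n + 1) → kˣ) ∈ (nsmulAddMonoidHom 2).range}
  mul_mem' {x y} hx hy := by
    change milnorSymbol (Fin.snoc u (x * y) : Fin (n + 1) → kˣ) ∈ (nsmulAddMonoidHom 2).range
    rw [milnorSymbol_snoc_mul]
    exact add_mem hx hy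
  one_mem' := by
    change milnorSymbol (Fin.snoc u 1 : Fin (n + 1) → kˣ) ∈ (nsmulAddMonoidHom 2).range
    rw [milnorSymbol_snoc_one]
    exact zero_mem _
  inv_mem' {x} hx := by
    change milnorSymbol (Fin.snoc u x⁻¹ : Fin (n + 1) → kˣ) ∈ (nsmulAddMonoidHom 2).range
    rw [milnorSymbol_snoc_inv]
    exact neg_mem hx

theorem mem_divTwoSubgroup_iff (u : Fin n → kˣ) (x : kˣ) :
    x ∈ divTwoSubgroup u ↔
      milnorSymbol (Fin.snoc u x : Fin (n + 1) → kˣ) ∈ (nsmulAddMonoidHom 2).range :=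
  Iff.rfl

theorem milnorSymbol_snoc_snoc_mem_of_left_mem {u : Fin n → kˣ} {x : kˣ}
    (hx : x ∈ divTwoSubgroup u) (y : kˣ) :
    milnorSymbol (Fin.snoc (Fin.snoc u x) y : Fin (n + 2) → kˣ) ∈ (nsmulAddMonoidHom 2).range := by
  rw [← mulSymbol_milnorSymbol]
  exact (mulSymbol y).map_mem_range_nsmulAddMonoidHom 2 hx

theorem milnorSymbol_snoc_snoc_mem_of_right_mem {u : Fin n → kˣ} {y : kˣ}
    (hy : y ∈ divTwoSubgroup u) (x : kˣ) :
    milnorSymbol (Fin.snoc (Fin.snoc u x) y : Fin (n + 2) → kˣ) ∈ (nsmulAddMonoidHom 2).range := by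
  rw [milnorSymbol_snoc_snoc_swap]
  exact neg_mem (milnorSymbol_snoc_snoc_mem_of_left_mem hy x)

theorem milnorSymbol_snoc_snoc_mem_of_mul_mul_eq_zero {u : Fin n → kˣ} {g h : kˣ}
    (hg : g ∈ divTwoSubgroup u) (hh : h ∈ divTwoSubgroup u) {x y : kˣ}
    (h₀ : milnorSymbol (Fin.snoc (Fin.snoc u (x * g)) (y * h) : Fin (n + 2) → kˣ) = 0) :
    milnorSymbol (Fin.snoc (Fin.snoc u x) y : Fin (n + 2) → kˣ) ∈ (nsmulAddMonoidHom 2).range := by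
  rw [milnorSymbol_snoc_snoc_mul, milnorSymbol_snoc_mul] at h₀
  rw [eq_neg_of_add_eq_zero_left ((add_assoc _ _ _).symm.trans h₀)]
  exact neg_mem (add_mem (milnorSymbol_snoc_snoc_mem_of_right_mem hh x)
    (milnorSymbol_snoc_snoc_mem_of_left_mem hg _))

theorem mem_divTwoSubgroup_of_pfisterForm_eq :
    ∀ {r : ℕ} (b : Fin r → kˣ) (c : kˣ) {x : (Fin r → Bool) → k},
      pfisterForm r (fun i => (b i : k)) x = c → c ∈ divTwoSubgroup b
  | 0, b, c, x, hx => by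
    rw [pfisterForm_zero] at hx
    have hy : x (fun _ => false) ≠ 0 :=
      fun h => c.ne_zero (by rw [← hx, h, zero_pow two_ne_zero])
    have hc : c = Units.mk0 _ hy * Units.mk0 _ hy := by
      ext
      rw [Units.val_mul, Units.val_mk0, ← hx, sq]
    rw [mem_divTwoSubgroup_iff, hc, milnorSymbol_snoc_mul]
    exact ⟨_, two_nsmul _⟩
  | r + 1, b, c, x, hx => by
    obtain ⟨b, β, rfl⟩ : ∃ b' β, Fin.snoc b' β = b := ⟨_, _, Fin.snoc_init_self b⟩
    simp only [pfisterForm_succ, Fin.snoc_castSucc, Fin.snoc_last] at hx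
    set p := pfisterForm r (fun i => (b i : k)) fun S => x (Fin.snoc S false)
    set q := pfisterForm r (fun i => (b i : k)) fun S => x (Fin.snoc S true)
    have hrep {y : (Fin r → Bool) → k} (hy : pfisterForm r (fun i => (b i : k)) y ≠ 0) :
        Units.mk0 _ hy ∈ divTwoSubgroup b :=
      mem_divTwoSubgroup_of_pfisterForm_eq b _ (Units.val_mk0 hy)
    rw [mem_divTwoSubgroup_iff]
    by_cases hq : q = 0
    · have hcp : c ∈ divTwoSubgroup b :=
        mem_divTwoSubgroup_of_pfisterForm_eq b c (by rw [← hx, hq, mul_zero, sub_zero])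
      refine milnorSymbol_snoc_snoc_mem_of_mul_mul_eq_zero (one_mem _) (inv_mem hcp) ?_
      rw [mul_one, mul_inv_cancel, milnorSymbol_snoc_one]
    by_cases hp : p = 0
    · refine milnorSymbol_snoc_snoc_mem_of_mul_mul_eq_zero (one_mem _) (inv_mem (hrep hq)) ?_
      have hc : c * (Units.mk0 q hq)⁻¹ = -β := by
        ext
        rw [Units.val_mul, Units.val_inv_eq_inv_val, Units.val_mk0, Units.val_neg, ← hx, hp]
        field_simp
        ring
      rw [mul_one, hc, milnorSymbol_snoc_snoc_neg_self]
    · refine milnorSymbol_snoc_snoc_mem_of_mul_mul_eq_zero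
        (mul_mem (hrep hq) (inv_mem (hrep hp))) (inv_mem (hrep hp)) ?_
      refine milnorSymbol_snoc_snoc_of_add_eq_one _ ?_
      change (β : k) * (q * p⁻¹) + c * p⁻¹ = 1
      rw [← hx]
      field_simp
      ring

end MilnorKGroup

/-- Proposition `isspl0` (rational point case) of Voevodsky's
"On 2-torsion in motivic cohomology": if `char k ≠ 2`, `n ≥ 2` (here `n = m+2`) and the norm
quadric `Q_{a₁,…,aₙ}` has a `k`-rational point, i.e. there is a nonzero `(x,t)` with
`⟨⟨a₁,…,a_{n-1}⟩⟩(x) = aₙ t²`, then the symbol `{a₁,…,aₙ}` is divisible by `2`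
in `K_n^M(k)`. -/
theorem milnorSymbol_div_two_of_norm_quadric_rational_point
    {k : Type*} [Field k] (hchar : ringChar k ≠ 2)
    (m : ℕ) (a : Fin (m + 2) → kˣ)
    (hpt : ∃ v : ((Fin (m + 1) → Bool) → k) × k, v ≠ 0 ∧
        pfisterForm (m + 1) (fun i => (a i.castSucc : k)) v.1 =
          (a (Fin.last (m + 1)) : k) * v.2 ^ 2) :
    ∃ y : MilnorKGroup k (m + 2), milnorSymbol a = 2 • y := by
  obtain ⟨v, hv, hφ⟩ := hpt
  obtain ⟨x, hx⟩ := exists_pfisterForm_eq_of_eq_mul_sq (Ring.two_ne_zero hchar)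
    (fun i => (a i.castSucc).ne_zero) hv hφ
  obtain ⟨y, hy⟩ := MilnorKGroup.mem_divTwoSubgroup_of_pfisterForm_eq (Fin.init a) _ hx
  rw [Fin.snoc_init_self] at hy
  exact ⟨y, hy.symm⟩
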